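/- arXiv:1711.10900 — 3 statements merged into one kernel-verified Lean document; each statement's English description precedes it below -/
import Mathlib

section
/- Let (Ω, F, P) be a complete probability space, let F_n ⊆ F be a P-complete σ-field, let Θ be a Borel subset of ℝ^p, and let G_n : Θ × Ω → ℝ^p be measurable with respect to the product of the Borel σ-field of Θ with F_n. Then the domain of definition D_n = {ω ∈ Ω : G_n(θ, ω) = 0 for at least one θ ∈ Θ} belongs to F_n, and there exists a G_n-estimator, i.e. an F_n-measurable map θ̂_n : Ω → Θ_δ such that θ̂_n(ω) ∈ Θ and G_n(θ̂_n(ω), ω) = 0 for ω ∈ D_n, and θ̂_n(ω) = δ for ω ∉ D_n. -/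
open MeasureTheory ProbabilityTheory Filter Topology Metric
open scoped RealInnerProductSpace

noncomputable section

/-- `ℝ^p` with the Euclidean norm. -/
abbrev Eucl (p : ℕ) := EuclideanSpace ℝ (Fin p)

/-- A measurable-space structure on `Θ_δ = Θ ∪ {δ}`, modelled as `Option`;
`none` plays the role of the special point `δ` lying outside the parameter set. -/
instance {α : Type u} [MeasurableSpace α] : MeasurableSpace (Option α) :=
  MeasurableSpace.comap (Equiv.optionEquivSumPUnit.{u, u} α) inferInstance

/-- The domain of definition `Dₙ` of `Gₙ`-estimators: the set of `ω` for which the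
estimating equation `Gₙ(θ, ω) = 0` has at least one solution `θ ∈ Θ`. -/
def Dset {Ω : Type*} {p : ℕ} (Θ : Set (Eucl p)) (G : Eucl p → Ω → Eucl p) : Set Ω :=
  {ω | ∃ θ ∈ Θ, G θ ω = 0}

/-- A `Gₙ`-estimator: an `𝓕ₙ`-measurable map into `Θ_δ` which solves the estimating equation
on `Dₙ` and equals `δ` (i.e. `none`) on the complement of `Dₙ`. -/
def IsEstimator {Ω : Type*} {p : ℕ} (𝓕n : MeasurableSpace Ω) (Θ : Set (Eucl p))
    (G : Eucl p → Ω → Eucl p) (est : Ω → Option (Eucl p)) : Prop :=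
  Measurable[𝓕n] est ∧
    ∀ ω, (ω ∈ Dset Θ G → ∃ θ, est ω = some θ ∧ θ ∈ Θ ∧ G θ ω = 0) ∧
      (ω ∉ Dset Θ G → est ω = none)

/-- The distance from a point of `Θ_δ` to a parameter `θ`, with the convention that the
distance from the special point `δ` to any point of `Θ` equals `1`. -/
def distδ {p : ℕ} (x : Option (Eucl p)) (θ : Eucl p) : ℝ :=
  Option.elim x 1 fun θ' => dist θ' θ

/-- Weak `θ̄`-consistency: convergence in `P`-probability of the estimator sequence to `θ̄`. -/
def WeaklyConsistent {Ω : Type*} [MeasurableSpace Ω] {p : ℕ} (P : Measure Ω)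
    (est : ℕ → Ω → Option (Eucl p)) (θbar : Eucl p) : Prop :=
  ∀ ε > (0 : ℝ), Tendsto (fun n => P {ω | ε ≤ distδ (est n ω) θbar}) atTop (𝓝 0)

section EstimatorAuxSection
open Filter Topology Set
open scoped ENNReal NNReal

namespace EstimatorAux

variable {X : Type*} [TopologicalSpace X] [PolishSpace X] [MeasurableSpace X] [BorelSpace X]

/-- Inner approximation of an analytic set by closed subsets, up to `ε`. -/
lemma analytic_inner (μ : Measure X) [IsFiniteMeasure μ] {S : Set X}
    (f : (ℕ → ℕ) → X) (hfc : Continuous f) (hfr : range f = S)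
    {ε : ℝ≥0∞} (hε : ε ≠ 0) :
    ∃ C : Set X, IsClosed C ∧ C ⊆ S ∧ μ S ≤ μ C + ε := by
  classical
  set Sig : (ℕ → ℕ) → ℕ → Set (ℕ → ℕ) := fun c k => {σ | ∀ i, i < k → σ i ≤ c i} with hSig_def
  have hεk : ∀ k : ℕ, (ε / 2 ^ (k + 1)) ≠ 0 := by
    intro k
    simp only [ne_eq, ENNReal.div_eq_zero_iff, hε, false_or]
    exact ENNReal.pow_ne_top (by norm_num)
  have step : ∀ (k : ℕ) (c : ℕ → ℕ), ∃ m : ℕ,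
      μ (f '' Sig c k) ≤ μ (f '' Sig (Function.update c k m) (k + 1)) + ε / 2 ^ (k + 1) := by
    intro k c
    have hmono : Monotone fun m => f '' Sig (Function.update c k m) (k + 1) := by
      intro m m' hmm'
      apply image_mono
      intro σ hσ i hi
      rcases Nat.lt_succ_iff_lt_or_eq.1 hi with h | h
      · rw [Function.update_apply, if_neg (Nat.ne_of_lt h)]
        have := hσ i hi
        rwa [Function.update_apply, if_neg (Nat.ne_of_lt h)] at this
      · subst h
        rw [Function.update_self]
        have := hσ i (Nat.lt_succ_self i)
        rw [Function.update_self] at this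
        exact this.trans hmm'
    have hun0 : (⋃ m, Sig (Function.update c k m) (k + 1)) = Sig c k := by
      ext σ
      simp only [mem_iUnion, mem_setOf_eq, hSig_def]
      constructor
      · rintro ⟨m, hm⟩ i hi
        have := hm i (hi.trans (Nat.lt_succ_self k))
        rwa [Function.update_apply, if_neg (Nat.ne_of_lt hi)] at this
      · intro h
        refine ⟨σ k, fun i hi => ?_⟩
        rcases Nat.lt_succ_iff_lt_or_eq.1 hi with h' | h'
        · rw [Function.update_apply, if_neg (Nat.ne_of_lt h')]
          exact h i h'
        · subst h'; rw [Function.update_self]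
    have hun : (⋃ m, f '' Sig (Function.update c k m) (k + 1)) = f '' Sig c k := by
      rw [← image_iUnion, hun0]
    have hsup : μ (f '' Sig c k) = ⨆ m, μ (f '' Sig (Function.update c k m) (k + 1)) := by
      rw [← hun]
      exact hmono.measure_iUnion
    rcases eq_or_ne (μ (f '' Sig c k)) 0 with h0 | h0
    · exact ⟨0, by simp [h0]⟩
    have hne : μ (f '' Sig c k) ≠ ∞ := measure_ne_top μ _
    have hlt : μ (f '' Sig c k) - ε / 2 ^ (k + 1) < μ (f '' Sig c k) :=
      ENNReal.sub_lt_self hne h0 (hεk k)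
    rw [hsup] at hlt
    rcases lt_iSup_iff.1 hlt with ⟨m, hm⟩
    rw [← hsup] at hm
    exact ⟨m, tsub_le_iff_right.1 hm.le⟩
  choose pick hpick using step
  set bseq : ℕ → ℕ → ℕ := fun k => Nat.rec (motive := fun _ => ℕ → ℕ) (fun _ => 0)
    (fun k c => Function.update c k (pick k c)) k with hbseq_def
  have bseq_succ : ∀ k, bseq (k + 1) = Function.update (bseq k) k (pick k (bseq k)) :=
    fun k => rfl
  set b : ℕ → ℕ := fun i => bseq (i + 1) i with hb_def
  have hagree : ∀ k i, i < k → bseq k i = b i := by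
    intro k
    induction k with
    | zero => intro i hi; omega
    | succ k ih =>
      intro i hi
      rcases Nat.lt_succ_iff_lt_or_eq.1 hi with h | h
      · rw [bseq_succ, Function.update_apply, if_neg (Nat.ne_of_lt h)]
        exact ih i h
      · subst h; rfl
  have hSigb : ∀ k, Sig b k = Sig (bseq k) k := by
    intro k
    ext σ
    simp only [hSig_def, mem_setOf_eq]
    constructor <;> intro h i hi
    · rw [hagree k i hi]; exact h i hi
    · rw [← hagree k i hi]; exact h i hi
  have hsum : ∀ k : ℕ, (∑ i ∈ Finset.range k, ε / 2 ^ (i + 1)) ≤ ε := by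
    intro k
    have h1 : ∀ i : ℕ, ε / 2 ^ (i + 1) = ε * 2⁻¹ * 2⁻¹ ^ i := by
      intro i
      rw [div_eq_mul_inv, pow_succ,
        ENNReal.mul_inv (Or.inl (by positivity)) (Or.inr (by norm_num)),
        mul_comm ((2 : ℝ≥0∞) ^ i)⁻¹ 2⁻¹, ← mul_assoc, ENNReal.inv_pow]
    calc (∑ i ∈ Finset.range k, ε / 2 ^ (i + 1)) ≤ ∑' i : ℕ, ε / 2 ^ (i + 1) :=
          ENNReal.sum_le_tsum _
    _ = ε := by
        simp_rw [h1]
        rw [ENNReal.tsum_mul_left, ENNReal.tsum_geometric, ENNReal.one_sub_inv_two, inv_inv,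
          mul_assoc, ENNReal.inv_mul_cancel (by norm_num) (by norm_num), mul_one]
  have hinv : ∀ k, μ S ≤ μ (f '' Sig (bseq k) k) + ∑ i ∈ Finset.range k, ε / 2 ^ (i + 1) := by
    intro k
    induction k with
    | zero =>
      have h0 : Sig (bseq 0) 0 = univ := by ext σ; simp [hSig_def]
      simp [h0, image_univ, hfr]
    | succ k ih =>
      calc μ S ≤ μ (f '' Sig (bseq k) k) + ∑ i ∈ Finset.range k, ε / 2 ^ (i + 1) := ih
      _ ≤ (μ (f '' Sig (bseq (k + 1)) (k + 1)) + ε / 2 ^ (k + 1)) +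
            ∑ i ∈ Finset.range k, ε / 2 ^ (i + 1) := by
          gcongr
          rw [bseq_succ]
          exact hpick k (bseq k)
      _ = μ (f '' Sig (bseq (k + 1)) (k + 1)) + ∑ i ∈ Finset.range (k + 1), ε / 2 ^ (i + 1) := by
          rw [Finset.sum_range_succ]; ring
  have hinv' : ∀ k, μ S ≤ μ (f '' Sig b k) + ε := by
    intro k
    rw [hSigb k]
    exact (hinv k).trans (add_le_add_right (hsum k) _)
  set E : ℕ → Set X := fun k => f '' Sig b k with hE_def
  have hE_anti : Antitone fun k => closure (E k) := by
    intro k k' hkk'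
    apply closure_mono
    apply image_mono
    intro σ hσ i hi
    exact hσ i (lt_of_lt_of_le hi hkk')
  refine ⟨⋂ k, closure (E k), isClosed_iInter fun k => isClosed_closure, ?_, ?_⟩
  · -- C ⊆ S
    intro x hx
    obtain ⟨U, hU⟩ := (𝓝 x).exists_antitone_basis
    have hsel : ∀ k, ∃ σ, σ ∈ Sig b k ∧ f σ ∈ U k := by
      intro k
      have hxk : x ∈ closure (E k) := mem_iInter.1 hx k
      rcases mem_closure_iff_nhds.1 hxk (U k) (hU.1.mem_of_mem trivial) with ⟨y, hyU, hyE⟩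
      rcases hyE with ⟨σ, hσ, rfl⟩
      exact ⟨σ, hσ, hyU⟩
    choose sel hsel1 hsel2 using hsel
    have hK : IsCompact {σ : ℕ → ℕ | ∀ i, σ i ≤ b i} := by
      have h : {σ : ℕ → ℕ | ∀ i, σ i ≤ b i} = Set.pi Set.univ fun i => Set.Iic (b i) := by
        ext σ; simp [Set.mem_pi, Set.mem_Iic, Pi.le_def]
      rw [h]
      exact isCompact_univ_pi fun i => (Set.finite_Iic (b i)).isCompact
    have hτK : ∀ k, (fun i => min (sel k i) (b i)) ∈ {σ : ℕ → ℕ | ∀ i, σ i ≤ b i} :=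
      fun k i => min_le_right _ _
    obtain ⟨σ, hσK, ψ, hψ, hconv⟩ := hK.tendsto_subseq hτK
    have hconv' : Tendsto (fun j => sel (ψ j)) atTop (𝓝 σ) := by
      rw [tendsto_pi_nhds]
      intro i
      have h1 : Tendsto (fun j => min (sel (ψ j) i) (b i)) atTop (𝓝 (σ i)) :=
        (tendsto_pi_nhds.1 hconv) i
      apply h1.congr'
      filter_upwards [eventually_ge_atTop (i + 1)] with j hj
      exact min_eq_left (hsel1 (ψ j) i (lt_of_lt_of_le (Nat.lt_succ_self i)
        (hj.trans hψ.le_apply)))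
    have hfx : Tendsto (fun j => f (sel (ψ j))) atTop (𝓝 (f σ)) :=
      (hfc.tendsto σ).comp hconv'
    have hfx2 : Tendsto (fun j => f (sel (ψ j))) atTop (𝓝 x) :=
      hU.tendsto fun j => hU.2 hψ.le_apply (hsel2 (ψ j))
    rw [← hfr]
    exact tendsto_nhds_unique hfx hfx2 ▸ mem_range_self σ
  · -- measure bound
    have h1 : μ (⋂ k, closure (E k)) = ⨅ k, μ (closure (E k)) :=
      hE_anti.measure_iInter (fun k => isClosed_closure.measurableSet.nullMeasurableSet)
        ⟨0, measure_ne_top μ _⟩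
    have h2 : ∀ k, μ S ≤ μ (closure (E k)) + ε := fun k =>
      (hinv' k).trans (add_le_add_left (measure_mono subset_closure) ε)
    calc μ S ≤ ⨅ k, (μ (closure (E k)) + ε) := le_iInf h2
    _ = (⨅ k, μ (closure (E k))) + ε := by rw [ENNReal.iInf_add]
    _ = μ (⋂ k, closure (E k)) + ε := by rw [h1]


/-- **Lusin's theorem**: analytic sets are universally (null-)measurable. -/
theorem analytic_nullMeasurable (μ : Measure X) [IsFiniteMeasure μ] {S : Set X}
    (hS : MeasureTheory.AnalyticSet S) : NullMeasurableSet S μ := by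
  rw [MeasureTheory.AnalyticSet] at hS
  rcases hS with rfl | ⟨f, hfc, hfr⟩
  · exact .of_null (by simp)
  have key : ∀ n : ℕ, ∃ C : Set X, IsClosed C ∧ C ⊆ range f ∧
      μ (range f) ≤ μ C + (↑(n + 1) : ℝ≥0∞)⁻¹ := by
    intro n
    apply analytic_inner μ f hfc rfl
    simp
  choose C hC1 hC2 hC3 using key
  have hC'sub : (⋃ n, C n) ⊆ range f := iUnion_subset hC2
  have hC'meas : MeasurableSet (⋃ n, C n) := .iUnion fun n => (hC1 n).measurableSet
  have hle : μ (range f) ≤ μ (⋃ n, C n) := by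
    apply ENNReal.le_of_forall_pos_le_add
    intro δ hδ _
    obtain ⟨n, hn⟩ := ENNReal.exists_inv_nat_lt (a := (δ : ℝ≥0∞)) (by exact_mod_cast hδ.ne')
    calc μ (range f) ≤ μ (C n) + (↑(n + 1) : ℝ≥0∞)⁻¹ := hC3 n
    _ ≤ μ (⋃ n, C n) + δ := by
        apply add_le_add (measure_mono (subset_iUnion C n))
        refine le_trans ?_ hn.le
        apply ENNReal.inv_le_inv.2
        exact_mod_cast Nat.le_succ n
  have hdiff : μ (range f \ ⋃ n, C n) = 0 := by
    have h := measure_inter_add_diff (μ := μ) (range f) hC'meas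
    rw [inter_eq_self_of_subset_right hC'sub] at h
    have h2 : μ (⋃ n, C n) + μ (range f \ ⋃ n, C n) ≤ μ (⋃ n, C n) + 0 := by
      rw [add_zero, h]; exact hle
    exact le_antisymm (ENNReal.le_of_add_le_add_left (measure_ne_top μ _) h2) (zero_le)
  have hsplit : range f = (⋃ n, C n) ∪ (range f \ ⋃ n, C n) :=
    (union_diff_cancel hC'sub).symm
  rw [← hfr, hsplit]
  exact hC'meas.nullMeasurableSet.union (NullMeasurableSet.of_null hdiff)


lemma prod_mono {α β : Type*} {m₁ m₁' : MeasurableSpace α} {m₂ m₂' : MeasurableSpace β}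
    (h₁ : m₁ ≤ m₁') (h₂ : m₂ ≤ m₂') : m₁.prod m₂ ≤ m₁'.prod m₂' :=
  sup_le_sup (MeasurableSpace.comap_mono h₁) (MeasurableSpace.comap_mono h₂)

lemma prod_comap_right {α β γ : Type*} (m₁ : MeasurableSpace α) (m₂ : MeasurableSpace γ)
    (g : β → γ) : m₁.prod (m₂.comap g) = (m₁.prod m₂).comap (Prod.map id g) := by
  have h1 : (Prod.fst ∘ Prod.map (id : α → α) g) = Prod.fst := rfl
  have h2 : (Prod.snd ∘ Prod.map (id : α → α) g) = g ∘ Prod.snd := rfl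
  unfold MeasurableSpace.prod
  rw [MeasurableSpace.comap_sup]
  simp only [MeasurableSpace.comap_comp]
  rw [h1, h2]

lemma exists_countable_factor {α Ω : Type*} (mα : MeasurableSpace α) (mΩ : MeasurableSpace Ω)
    {A : Set (α × Ω)} (hA : MeasurableSet[mα.prod mΩ] A) :
    ∃ s : ℕ → Set Ω, (∀ n, MeasurableSet[mΩ] (s n)) ∧
      MeasurableSet[mα.prod (.generateFrom (Set.range s))] A := by
  classical
  let m' : MeasurableSpace (α × Ω) :=
    { MeasurableSet' := fun A => ∃ s : ℕ → Set Ω, (∀ n, MeasurableSet[mΩ] (s n)) ∧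
        MeasurableSet[mα.prod (.generateFrom (Set.range s))] A
      measurableSet_empty := ⟨fun _ => ∅, fun _ => MeasurableSet.empty,
        @MeasurableSet.empty _ (mα.prod (.generateFrom (Set.range fun _ : ℕ => (∅ : Set Ω))))⟩
      measurableSet_compl := by
        rintro A ⟨s, hs, hA⟩
        exact ⟨s, hs, hA.compl⟩
      measurableSet_iUnion := by
        rintro F hF
        choose s hs hmeas using hF
        refine ⟨fun m => s m.unpair.1 m.unpair.2, fun m => hs _ _, ?_⟩
        apply MeasurableSet.iUnion
        intro n
        have hle : MeasurableSpace.generateFrom (Set.range (s n)) ≤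
            MeasurableSpace.generateFrom (Set.range fun m : ℕ => s m.unpair.1 m.unpair.2) := by
          apply MeasurableSpace.generateFrom_le
          rintro t ⟨i, rfl⟩
          apply MeasurableSpace.measurableSet_generateFrom
          exact ⟨Nat.pair n i, by simp⟩
        exact prod_mono le_rfl hle _ (hmeas n) }
  have hle : mα.prod mΩ ≤ m' := by
    apply sup_le
    · rintro t ⟨u, hu, rfl⟩
      refine ⟨fun _ => ∅, fun _ => MeasurableSet.empty, ?_⟩
      have hfst : MeasurableSpace.comap Prod.fst mα ≤
          mα.prod (.generateFrom (Set.range fun _ : ℕ => (∅ : Set Ω))) := le_sup_left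
      exact hfst _ ⟨u, hu, rfl⟩
    · rintro t ⟨u, hu, rfl⟩
      refine ⟨fun _ => u, fun _ => hu, ?_⟩
      have hsnd : MeasurableSpace.comap Prod.snd
          (MeasurableSpace.generateFrom (Set.range fun _ : ℕ => u)) ≤
          mα.prod (.generateFrom (Set.range fun _ : ℕ => u)) := le_sup_right
      exact hsnd _ ⟨u, MeasurableSpace.measurableSet_generateFrom ⟨0, rfl⟩, rfl⟩
  exact hle A hA

lemma measurable_option_piecewise {Ω α : Type*} [MeasurableSpace α] {m : MeasurableSpace Ω}
    {D : Set Ω} (hD : MeasurableSet[m] D) {g : Ω → α} (hg : Measurable[m] g)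
    {F : Ω → Option α} (hF1 : ∀ ω ∈ D, F ω = some (g ω)) (hF2 : ∀ ω ∉ D, F ω = none) :
    Measurable[m] F := by
  classical
  intro t ht
  obtain ⟨t', ht', hpre⟩ := MeasurableSpace.measurableSet_comap.1 ht
  have hsome : (fun a : α => (some a : Option α)) ⁻¹' t = Sum.inl ⁻¹' t' := by
    rw [← hpre]
    ext a
    simp [Equiv.optionEquivSumPUnit]
  have hkey : F ⁻¹' t =
      (D ∩ g ⁻¹' ((fun a : α => (some a : Option α)) ⁻¹' t)) ∪
        (Dᶜ ∩ (if (none : Option α) ∈ t then Set.univ else ∅)) := by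
    ext ω
    by_cases hω : ω ∈ D <;> by_cases hn : (none : Option α) ∈ t <;>
      simp [hω, hn, Set.mem_preimage, hF1 ω, hF2 ω]
  rw [hkey]
  refine MeasurableSet.union (hD.inter ?_) (hD.compl.inter ?_)
  · rw [hsome]
    exact hg (measurable_inl ht')
  · split_ifs
    · exact MeasurableSet.univ
    · exact MeasurableSet.empty

end EstimatorAux

end EstimatorAuxSection

/-- **Existence of estimators (Section 2).**  If `P` is complete, `𝓕ₙ ⊆ 𝓕` is a `P`-complete
σ-field, `Θ` is a Borel subset of `ℝ^p` and `Gₙ` is measurable with respect to the product of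
the Borel σ-field of `Θ` with `𝓕ₙ`, then the domain of definition `Dₙ` belongs to `𝓕ₙ` and a
`Gₙ`-estimator exists. -/
theorem estimator_exists {Ω : Type*} [𝓕 : MeasurableSpace Ω] {p : ℕ}
    (P : Measure Ω) [IsProbabilityMeasure P] [P.IsComplete]
    (𝓕n : MeasurableSpace Ω) (hle : 𝓕n ≤ 𝓕)
    (hcomplete : ∀ s : Set Ω, P s = 0 → MeasurableSet[𝓕n] s)
    (Θ : Set (Eucl p)) (hΘ : MeasurableSet Θ)
    (G : Eucl p → Ω → Eucl p)
    (hG : Measurable[MeasurableSpace.prod (inferInstance : MeasurableSpace ↥Θ) 𝓕n]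
      (fun q : ↥Θ × Ω => G q.1 q.2)) :
    MeasurableSet[𝓕n] (Dset Θ G) ∧ ∃ est : Ω → Option (Eucl p), IsEstimator 𝓕n Θ G est := by
  classical
  -- The solution set `A` in `ℝ^p × Ω`, measurable for `Borel(ℝ^p) ⊗ 𝓕ₙ`.
  set A : Set (Eucl p × Ω) := {z | z.1 ∈ Θ ∧ G z.1 z.2 = 0} with hA_def
  have h0 : MeasurableSet[MeasurableSpace.prod (inferInstance : MeasurableSpace ↥Θ) 𝓕n]
      {q : ↥Θ × Ω | G q.1 q.2 = 0} := hG (measurableSet_singleton 0)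
  have e2 : @MeasurableEmbedding (↥Θ × Ω) (Eucl p × Ω)
      (MeasurableSpace.prod (inferInstance : MeasurableSpace ↥Θ) 𝓕n)
      ((inferInstance : MeasurableSpace (Eucl p)).prod 𝓕n)
      (fun q : ↥Θ × Ω => ((q.1 : Eucl p), q.2)) :=
    MeasurableEmbedding.prodMap (MeasurableEmbedding.subtype_coe hΘ)
      (@MeasurableEmbedding.id Ω 𝓕n)
  have himg : (fun q : ↥Θ × Ω => ((q.1 : Eucl p), q.2)) '' {q : ↥Θ × Ω | G q.1 q.2 = 0}
      = A := by
    ext ⟨z, ω⟩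
    constructor
    · rintro ⟨⟨θ, ω'⟩, hq, heq⟩
      obtain ⟨h1, h2⟩ : (θ : Eucl p) = z ∧ ω' = ω := by
        simpa [Prod.ext_iff] using heq
      subst h1; subst h2
      exact ⟨θ.2, hq⟩
    · rintro ⟨hz, hG0⟩
      exact ⟨⟨⟨z, hz⟩, ω⟩, hG0, rfl⟩
  have hA : MeasurableSet[(inferInstance : MeasurableSpace (Eucl p)).prod 𝓕n] A := by
    rw [← himg]
    exact e2.measurableSet_image' h0
  -- Factor `A` through a countably generated sub-σ-algebra, encoded by `φ : Ω → ℕ → ℕ`.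
  obtain ⟨s, hs_meas, hs_A⟩ := EstimatorAux.exists_countable_factor _ 𝓕n hA
  set φ : Ω → ℕ → ℕ := fun ω n => if ω ∈ s n then 1 else 0 with hφ_def
  have hφn : Measurable[𝓕n] φ := by
    rw [measurable_pi_iff]
    intro n
    exact Measurable.ite (hs_meas n) measurable_const measurable_const
  have hφ : @Measurable Ω (ℕ → ℕ) 𝓕 _ φ := fun t ht => hle _ (hφn ht)
  have hsn : ∀ n, s n = φ ⁻¹' {x : ℕ → ℕ | x n = 1} := by
    intro n; ext ω; by_cases h : ω ∈ s n <;> simp [hφ_def, h]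
  have hgen : MeasurableSpace.generateFrom (Set.range s) ≤
      MeasurableSpace.comap φ inferInstance := by
    apply MeasurableSpace.generateFrom_le
    rintro t ⟨n, rfl⟩
    refine ⟨{x : ℕ → ℕ | x n = 1}, ?_, (hsn n).symm⟩
    exact measurable_pi_apply n (measurableSet_singleton 1)
  have hA2 : MeasurableSet[((inferInstance : MeasurableSpace (Eucl p)).prod
      (inferInstance : MeasurableSpace (ℕ → ℕ))).comap (Prod.map id φ)] A := by
    have h := EstimatorAux.prod_mono (le_refl (inferInstance : MeasurableSpace (Eucl p)))
      hgen _ hs_A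
    rwa [EstimatorAux.prod_comap_right] at h
  obtain ⟨A', hA'meas, hA'pre⟩ := MeasurableSpace.measurableSet_comap.1 hA2
  have hA'm : MeasurableSet A' := hA'meas
  set S : Set (ℕ → ℕ) := Prod.snd '' A' with hS_def
  have hDeq : Dset Θ G = φ ⁻¹' S := by
    ext ω
    simp only [Dset, Set.mem_setOf_eq, Set.mem_preimage, hS_def, Set.mem_image]
    constructor
    · rintro ⟨θ, hθ, h0'⟩
      have hmem : (θ, ω) ∈ A := ⟨hθ, h0'⟩
      rw [← hA'pre] at hmem
      exact ⟨(θ, φ ω), hmem, rfl⟩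
    · rintro ⟨⟨θ, x⟩, hmem, hx⟩
      obtain rfl : x = φ ω := hx
      have hmem' : (θ, ω) ∈ A := by rw [← hA'pre]; exact hmem
      exact ⟨θ, hmem'.1, hmem'.2⟩
  set μX : Measure (ℕ → ℕ) := @Measure.map Ω (ℕ → ℕ) 𝓕 _ φ P with hμX_def
  haveI : IsFiniteMeasure μX := by
    refine ⟨?_⟩
    rw [show μX Set.univ = P (φ ⁻¹' Set.univ) from Measure.map_apply hφ MeasurableSet.univ]
    exact measure_lt_top P _
  -- Pull back analytic subsets of `ℕ → ℕ` into `𝓕ₙ`, using completeness.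
  have lemB : ∀ T : Set (ℕ → ℕ), MeasureTheory.AnalyticSet T →
      MeasurableSet[𝓕n] (φ ⁻¹' T) := by
    intro T hT
    have hTn : NullMeasurableSet T μX := EstimatorAux.analytic_nullMeasurable μX hT
    obtain ⟨T₁, hT₁sub, hT₁meas, hT₁ae⟩ := hTn.exists_measurable_subset_ae_eq
    have h1 : μX (T \ T₁) = 0 := (ae_eq_set.1 hT₁ae.symm).1
    have hnull : P (φ ⁻¹' (T \ T₁)) = 0 := by
      refine le_antisymm ?_ (zero_le)
      calc P (φ ⁻¹' (T \ T₁)) ≤ μX (T \ T₁) := Measure.le_map_apply hφ.aemeasurable _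
      _ = 0 := h1
    have hsplit : φ ⁻¹' T = (φ ⁻¹' T₁) ∪ (φ ⁻¹' (T \ T₁)) := by
      rw [← Set.preimage_union, Set.union_diff_cancel hT₁sub]
    rw [hsplit]
    exact MeasurableSet.union (hφn hT₁meas) (hcomplete _ hnull)
  have hS_analytic : MeasureTheory.AnalyticSet S :=
    hA'm.analyticSet.image_of_continuous continuous_snd
  have hD : MeasurableSet[𝓕n] (Dset Θ G) := by rw [hDeq]; exact lemB S hS_analytic
  refine ⟨hD, ?_⟩
  by_cases hA'emp : A' = ∅
  · -- no solutions at all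
    have hSemp : S = ∅ := by rw [hS_def, hA'emp, Set.image_empty]
    have hDempty : Dset Θ G = ∅ := by rw [hDeq, hSemp]; simp
    refine ⟨fun _ => none, @measurable_const _ _ _ 𝓕n none, fun ω => ?_⟩
    constructor
    · intro hω; rw [hDempty] at hω; exact absurd hω (Set.notMem_empty ω)
    · intro _; rfl
  -- main case : `A'` is a nonempty Borel set, hence the range of a continuous map on `ℕ → ℕ`
  have hA'an : MeasureTheory.AnalyticSet A' := hA'm.analyticSet
  rw [MeasureTheory.AnalyticSet] at hA'an
  obtain ⟨f, hfc, hfr⟩ := hA'an.resolve_left hA'emp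
  -- cylinders and their analytic projections
  set Cyl : (ℕ → ℕ) → ℕ → Set (ℕ → ℕ) := fun c k => {σ | ∀ i, i < k → σ i = c i} with hCyl_def
  set W : (ℕ → ℕ) → ℕ → Set (ℕ → ℕ) := fun c k => Prod.snd '' (f '' Cyl c k) with hW_def
  have hW_analytic : ∀ c k, MeasureTheory.AnalyticSet (W c k) := by
    intro c k
    have hcl : IsClosed (Cyl c k) := by
      have hh : Cyl c k = ⋂ i ∈ {i : ℕ | i < k}, {σ : ℕ → ℕ | σ i = c i} := by
        ext σ; simp [hCyl_def]
      rw [hh]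
      refine isClosed_biInter fun i _ => ?_
      exact isClosed_eq (continuous_apply i) continuous_const
    exact (hcl.analyticSet.image_of_continuous hfc).image_of_continuous continuous_snd
  have hCyl_congr : ∀ (c c' : ℕ → ℕ) (k : ℕ), (∀ i, i < k → c i = c' i) →
      Cyl c k = Cyl c' k := by
    intro c c' k h
    ext σ
    simp only [hCyl_def, Set.mem_setOf_eq]
    constructor <;> intro hσ i hi
    · rw [← h i hi]; exact hσ i hi
    · rw [h i hi]; exact hσ i hi
  -- the lexicographically least branch through the cylinder tree
  set nd : (ℕ → ℕ) → ℕ → (ℕ → ℕ) → ℕ := fun x k c =>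
    if h : ∃ a, x ∈ W (Function.update c k a) (k + 1) then Nat.find h else 0 with hnd_def
  set cseq : (ℕ → ℕ) → ℕ → ℕ → ℕ := fun x k => Nat.rec (motive := fun _ => ℕ → ℕ) (fun _ => 0)
    (fun k c => Function.update c k (nd x k c)) k with hcseq_def
  have cseq_succ : ∀ x k, cseq x (k + 1) = Function.update (cseq x k) k (nd x k (cseq x k)) :=
    fun x k => rfl
  set σf : (ℕ → ℕ) → ℕ → ℕ := fun x i => cseq x (i + 1) i with hσf_def
  have hagree : ∀ x k i, i < k → cseq x k i = σf x i := by
    intro x k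
    induction k with
    | zero => intro i hi; omega
    | succ k ih =>
      intro i hi
      rcases Nat.lt_succ_iff_lt_or_eq.1 hi with h | h
      · rw [cseq_succ, Function.update_apply, if_neg (Nat.ne_of_lt h)]
        exact ih i h
      · subst h; rfl
  have hzero : ∀ x k i, k ≤ i → cseq x k i = 0 := by
    intro x k
    induction k with
    | zero => intro i _; rfl
    | succ k ih =>
      intro i hi
      rw [cseq_succ, Function.update_apply, if_neg (by omega)]
      exact ih i (by omega)
  -- the branch always stays inside the tree of nonempty sections
  have hinv : ∀ x, x ∈ S → ∀ k, x ∈ W (cseq x k) k := by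
    intro x hx k
    induction k with
    | zero =>
      have huniv : Cyl (cseq x 0) 0 = Set.univ := by ext σ; simp [hCyl_def]
      have hW0 : W (cseq x 0) 0 = S := by
        rw [hW_def]
        simp only [huniv, Set.image_univ, hfr, hS_def]
      rwa [hW0]
    | succ k ih =>
      have hex : ∃ a, x ∈ W (Function.update (cseq x k) k a) (k + 1) := by
        rcases ih with ⟨y, ⟨σu, hσu, rfl⟩, hyx⟩
        refine ⟨σu k, f σu, ⟨σu, ?_, rfl⟩, hyx⟩
        intro i hi
        rcases Nat.lt_succ_iff_lt_or_eq.1 hi with h | h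
        · rw [Function.update_apply, if_neg (Nat.ne_of_lt h)]
          exact hσu i h
        · subst h; rw [Function.update_self]
      rw [cseq_succ]
      have hndeq : nd x k (cseq x k) = Nat.find hex := by rw [hnd_def]; exact dif_pos hex
      rw [hndeq]
      exact Nat.find_spec hex
  -- in the limit, the selected branch yields a genuine solution
  have hlim : ∀ x, x ∈ S → f (σf x) ∈ A' ∧ (f (σf x)).2 = x := by
    intro x hx
    have hWk' : ∀ k, ∃ σu, σu ∈ Cyl (σf x) k ∧ (f σu).2 = x := by
      intro k
      have hthis := hinv x hx k
      have hCylEq : Cyl (cseq x k) k = Cyl (σf x) k :=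
        hCyl_congr _ _ k fun i hi => hagree x k i hi
      simp only [hW_def] at hthis
      rw [hCylEq] at hthis
      rcases hthis with ⟨y, ⟨σu, hσu, rfl⟩, hyx⟩
      exact ⟨σu, hσu, hyx⟩
    choose τ hτ1 hτ2 using hWk'
    have hτconv : Filter.Tendsto τ Filter.atTop (nhds (σf x)) := by
      rw [tendsto_pi_nhds]
      intro i
      apply tendsto_const_nhds.congr'
      filter_upwards [Filter.eventually_ge_atTop (i + 1)] with k hk
      exact (hτ1 k i (lt_of_lt_of_le (Nat.lt_succ_self i) hk)).symm
    have h1 : Filter.Tendsto (fun k => f (τ k)) Filter.atTop (nhds (f (σf x))) :=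
      (hfc.tendsto _).comp hτconv
    have h2 : Filter.Tendsto (fun k => (f (τ k)).2) Filter.atTop (nhds ((f (σf x)).2)) :=
      (continuous_snd.tendsto _).comp h1
    have h3 : (f (σf x)).2 = x := by
      have hcst : Filter.Tendsto (fun k => (f (τ k)).2) Filter.atTop (nhds x) := by
        simp only [hτ2]
        exact tendsto_const_nhds
      exact tendsto_nhds_unique h2 hcst
    exact ⟨hfr ▸ Set.mem_range_self (σf x), h3⟩
  -- measurability of the digit functions
  have hQ : ∀ k, Measurable[𝓕n] fun ω => cseq (φ ω) k := by
    intro k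
    induction k with
    | zero => exact measurable_const
    | succ k ih =>
      rw [measurable_pi_iff]
      intro i
      by_cases hik : i = k
      · subst hik
        have hre : (fun ω => cseq (φ ω) (i + 1) i) = fun ω => nd (φ ω) i (cseq (φ ω) i) := by
          funext ω; rw [cseq_succ, Function.update_self]
        rw [hre]
        apply measurable_to_countable'
        intro a
        set cd : (Fin i → ℕ) → ℕ → ℕ := fun d j => if h : j < i then d ⟨j, h⟩ else 0 with hcd_def
        have hnd_fixed : ∀ c : ℕ → ℕ, MeasurableSet[𝓕n] {ω | nd (φ ω) i c = a} := by
          intro c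
          rcases eq_or_ne a 0 with rfl | ha
          · have hset : {ω | nd (φ ω) i c = 0} =
                (φ ⁻¹' W (Function.update c i 0) (i + 1)) ∪
                  (⋃ b, φ ⁻¹' W (Function.update c i b) (i + 1))ᶜ := by
              ext ω
              simp only [Set.mem_setOf_eq, Set.mem_union, Set.mem_preimage, Set.mem_compl_iff,
                Set.mem_iUnion, hnd_def]
              by_cases hex : ∃ b, φ ω ∈ W (Function.update c i b) (i + 1)
              · rw [dif_pos hex, Nat.find_eq_zero hex]
                simp [hex]
              · rw [dif_neg hex]
                push_neg at hex
                simp [hex]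
            rw [hset]
            refine MeasurableSet.union (lemB _ (hW_analytic _ _)) (MeasurableSet.compl ?_)
            exact MeasurableSet.iUnion fun b => lemB _ (hW_analytic _ _)
          · have hset : {ω | nd (φ ω) i c = a} =
                (φ ⁻¹' W (Function.update c i a) (i + 1)) ∩
                  ⋂ b ∈ {b : ℕ | b < a}, (φ ⁻¹' W (Function.update c i b) (i + 1))ᶜ := by
              ext ω
              simp only [Set.mem_setOf_eq, Set.mem_inter_iff, Set.mem_preimage,
                Set.mem_iInter, Set.mem_compl_iff, hnd_def]
              by_cases hex : ∃ b, φ ω ∈ W (Function.update c i b) (i + 1)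
              · rw [dif_pos hex, Nat.find_eq_iff hex]
              · rw [dif_neg hex]
                push_neg at hex
                constructor
                · intro h'; exact absurd h'.symm ha
                · rintro ⟨h1', -⟩; exact absurd h1' (hex a)
            rw [hset]
            refine MeasurableSet.inter (lemB _ (hW_analytic _ _)) ?_
            exact MeasurableSet.biInter (Set.to_countable _)
              fun b _ => MeasurableSet.compl (lemB _ (hW_analytic _ _))
        have hdecomp : {ω | nd (φ ω) i (cseq (φ ω) i) = a} =
            ⋃ d : Fin i → ℕ,
              ({ω | cseq (φ ω) i = cd d} ∩ {ω | nd (φ ω) i (cd d) = a}) := by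
          ext ω
          simp only [Set.mem_setOf_eq, Set.mem_iUnion, Set.mem_inter_iff]
          constructor
          · intro h'
            refine ⟨fun j => cseq (φ ω) i j, ?_, ?_⟩
            · funext j
              simp only [hcd_def]
              by_cases hj : j < i
              · rw [dif_pos hj]
              · rw [dif_neg hj]
                exact hzero (φ ω) i j (by omega)
            · have hcde : cd (fun j => cseq (φ ω) i j) = cseq (φ ω) i := by
                funext j
                simp only [hcd_def]
                by_cases hj : j < i
                · rw [dif_pos hj]
                · rw [dif_neg hj]
                  exact (hzero (φ ω) i j (by omega)).symm
              rw [hcde]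
              exact h'
          · rintro ⟨d, h1', h2'⟩
            rw [h1']
            exact h2'
        have hgoal : (fun ω => nd (φ ω) i (cseq (φ ω) i)) ⁻¹' {a} =
            {ω | nd (φ ω) i (cseq (φ ω) i) = a} := rfl
        rw [hgoal, hdecomp]
        refine MeasurableSet.iUnion fun d => MeasurableSet.inter ?_ (hnd_fixed (cd d))
        have hre2 : {ω | cseq (φ ω) i = cd d} = ⋂ j : ℕ, {ω | cseq (φ ω) i j = cd d j} := by
          ext ω
          simp only [Set.mem_setOf_eq, Set.mem_iInter]
          exact ⟨fun h' j => by rw [h'], fun h' => funext h'⟩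
        rw [hre2]
        exact MeasurableSet.iInter fun j =>
          (measurable_pi_iff.1 ih j) (measurableSet_singleton (cd d j))
      · have hre : (fun ω => cseq (φ ω) (k + 1) i) = fun ω => cseq (φ ω) k i := by
          funext ω; rw [cseq_succ, Function.update_apply, if_neg hik]
        rw [hre]
        exact measurable_pi_iff.1 ih i
  have hσφ : Measurable[𝓕n] fun ω => σf (φ ω) := by
    rw [measurable_pi_iff]
    intro i
    exact measurable_pi_iff.1 (hQ (i + 1)) i
  have hθm : Measurable[𝓕n] fun ω => (f (σf (φ ω))).1 :=
    measurable_fst.comp (hfc.measurable.comp hσφ)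
  refine ⟨fun ω => if ω ∈ Dset Θ G then some ((f (σf (φ ω))).1) else none,
    EstimatorAux.measurable_option_piecewise hD hθm (fun ω hω => if_pos hω)
      (fun ω hω => if_neg hω), ?_⟩
  intro ω
  constructor
  · intro hω
    have hxS : φ ω ∈ S := by rw [hDeq] at hω; exact hω
    obtain ⟨hmemA', hsnd⟩ := hlim (φ ω) hxS
    have hpair : ((f (σf (φ ω))).1, φ ω) = f (σf (φ ω)) := Prod.ext rfl hsnd.symm
    have hmemA : ((f (σf (φ ω))).1, ω) ∈ A := by
      rw [← hA'pre]
      show ((f (σf (φ ω))).1, φ ω) ∈ A'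
      rw [hpair]
      exact hmemA'
    exact ⟨(f (σf (φ ω))).1, if_pos hω, hmemA.1, hmemA.2⟩
  · intro hω
    exact if_neg hω
end
end

section
/- Assume Condition 2.1 and let (θ̂_n) and (θ̂'_n) be two sequences of G_n-estimators, both weakly θ̄-consistent. Then P(θ̂_n ≠ θ̂'_n) → 0 as n → ∞ (eventual uniqueness). -/
open MeasureTheory ProbabilityTheory Filter Topology Metric
open scoped ENNReal
open scoped RealInnerProductSpace

noncomputable section

/-- **Condition 2.1**: there is a parameter value `θ̄` in the interior of `Θ`, a neighbourhood
`M` of `θ̄`, and a (possibly random) limit function `G` such that (i) `Gₙ(θ̄) → 0` in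
`P`-probability and `G(θ̄) = 0` a.s.; (ii) a.s. all `Gₙ(⬝, ω)` and `G(⬝, ω)` are `C¹` on `M`
and `sup_{θ∈M} ‖∂_θGₙ(θ) - ∂_θG(θ)‖ → 0` in `P`-probability (operator norm);
(iii) `∂_θG(θ̄)` is a.s. invertible. -/
def Cond21 {Ω : Type*} [MeasurableSpace Ω] {p : ℕ} (P : Measure Ω) (Θ : Set (Eucl p))
    (G : ℕ → Eucl p → Ω → Eucl p) (θbar : Eucl p) (M : Set (Eucl p))
    (Glim : Eucl p → Ω → Eucl p) : Prop :=
  θbar ∈ interior Θ ∧ IsOpen M ∧ θbar ∈ M ∧ M ⊆ Θ ∧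
  TendstoInMeasure P (fun n ω => G n θbar ω) atTop (fun _ => 0) ∧
  (∀ᵐ ω ∂P, Glim θbar ω = 0) ∧
  (∀ᵐ ω ∂P, (∀ n, ContDiffOn ℝ 1 (fun θ => G n θ ω) M) ∧
    ContDiffOn ℝ 1 (fun θ => Glim θ ω) M) ∧
  (∀ ε > (0 : ℝ), Tendsto (fun n =>
      P {ω | ∃ θ ∈ M, ε ≤
        ‖fderiv ℝ (fun θ' => G n θ' ω) θ - fderiv ℝ (fun θ' => Glim θ' ω) θ‖})
      atTop (𝓝 0)) ∧
  (∀ᵐ ω ∂P, IsUnit (fderiv ℝ (fun θ => Glim θ ω) θbar))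

-- measurability of {f = g} for Option (Eucl p)-valued maps
lemma measurableSet_ne_option {Ω : Type*} {m : MeasurableSpace Ω} {p : ℕ}
    {f g : Ω → Option (Eucl p)} (hf : Measurable f) (hg : Measurable g) :
    MeasurableSet {ω | f ω ≠ g ω} := by
  have he : Measurable (Equiv.optionEquivSumPUnit.{0,0} (Eucl p)) := fun _ ht => ⟨_, ht, rfl⟩
  set e := (Equiv.optionEquivSumPUnit.{0,0} (Eucl p) : Option (Eucl p) → Eucl p ⊕ PUnit)
  set b : Eucl p ⊕ PUnit → Bool := Sum.elim (fun _ => true) (fun _ => false) with hbdef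
  set d : Eucl p ⊕ PUnit → Eucl p := Sum.elim id (fun _ => 0) with hddef
  have hb : Measurable b := Measurable.sumElim measurable_const measurable_const
  have hd : Measurable d := Measurable.sumElim measurable_id measurable_const
  have key : ∀ x y : Option (Eucl p), x = y ↔ (b (e x) = b (e y) ∧ d (e x) = d (e y)) := by
    intro x y
    cases x <;> cases y <;>
      simp [hbdef, hddef, e, Equiv.optionEquivSumPUnit]
  have hset : {ω | f ω = g ω} =
      {ω | b (e (f ω)) = b (e (g ω))} ∩ {ω | d (e (f ω)) = d (e (g ω))} := by
    ext ω; simpa using key (f ω) (g ω)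
  have h1 : MeasurableSet {ω | b (e (f ω)) = b (e (g ω))} :=
    measurableSet_eq_fun ((hb.comp (he.comp hf)))
      ((hb.comp (he.comp hg)))
  have hmf : Measurable fun ω => d (e (f ω)) := hd.comp (he.comp hf)
  have hmg : Measurable fun ω => d (e (g ω)) := hd.comp (he.comp hg)
  have h2 : MeasurableSet {ω | d (e (f ω)) = d (e (g ω))} :=
    measurableSet_eq_fun hmf hmg
  have hms : MeasurableSet {ω | f ω = g ω} := hset ▸ h1.inter h2
  rw [show {ω | f ω ≠ g ω} = {ω | f ω = g ω}ᶜ from rfl]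
  exact hms.compl

-- extraction + Borel-Cantelli
lemma extract_ae {Ω : Type*} [MeasurableSpace Ω] (P : Measure Ω)
    (T : ℝ → ℕ → Set Ω)
    (hmono : ∀ n : ℕ, ∀ ε ε' : ℝ, ε ≤ ε' → T ε' n ⊆ T ε n)
    (h : ∀ ε > (0:ℝ), Tendsto (fun n => P (T ε n)) atTop (𝓝 0))
    (ns : ℕ → ℕ) (hns : Tendsto ns atTop atTop) :
    ∃ ms : ℕ → ℕ, Tendsto ms atTop atTop ∧
      ∀ᵐ ω ∂P, ∀ ε > (0:ℝ), ∀ᶠ k in atTop, ω ∉ T ε (ns (ms k)) := by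
  have hjpos : ∀ j : ℕ, (0:ℝ) < 1 / (j + 1) := fun j => by positivity
  have hN : ∀ j : ℕ, ∃ N : ℕ, ∀ k ≥ N, P (T (1/(j+1)) (ns k)) ≤ (2⁻¹ : ℝ≥0∞) ^ j := by
    intro j
    have hpow : (0 : ℝ≥0∞) < 2⁻¹ ^ j :=
      ENNReal.pow_pos (ENNReal.inv_pos.2 ENNReal.ofNat_ne_top) j
    have hev : ∀ᶠ k in atTop, P (T (1/(j+1)) (ns k)) < 2⁻¹ ^ j :=
      Filter.Tendsto.eventually_lt_const hpow ((h _ (hjpos j)).comp hns)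
    obtain ⟨N, hN⟩ := eventually_atTop.1 hev
    exact ⟨N, fun k hk => (hN k hk).le⟩
  choose N hNspec using hN
  refine ⟨fun k => N k + k, ?_, ?_⟩
  · exact tendsto_atTop_mono (fun k => Nat.le_add_left k (N k)) tendsto_id
  · have hsum : (∑' (k : ℕ), P (T (1/(k+1)) (ns (N k + k)))) ≠ ∞ := by
      refine ne_top_of_le_ne_top ?_ (ENNReal.tsum_le_tsum fun k =>
        hNspec k (N k + k) (Nat.le_add_right _ _))
      rw [ENNReal.tsum_geometric]
      simp [ENNReal.sub_half]
    filter_upwards [ae_eventually_notMem hsum] with ω hω ε hε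
    obtain ⟨j, hj⟩ := exists_nat_one_div_lt hε
    filter_upwards [hω, eventually_ge_atTop j] with k hk1 hk2 hmem
    refine hk1 (hmono _ _ _ ?_ hmem)
    have : (1:ℝ)/(k+1) ≤ 1/(j+1) := by
      apply one_div_le_one_div_of_le (by positivity)
      exact_mod_cast Nat.succ_le_succ hk2
    linarith

-- deterministic core: eventual coincidence of zeros
set_option synthInstance.maxHeartbeats 1000000 in
set_option maxHeartbeats 1000000 in
lemma key_eventually_eq {p : ℕ} (M : Set (Eucl p)) (hM : IsOpen M) (θbar : Eucl p)
    (hθM : θbar ∈ M)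
    (f : ℕ → Eucl p → Eucl p) (g : Eucl p → Eucl p)
    (hfC : ∀ k, ContDiffOn ℝ 1 (f k) M) (hgC : ContDiffOn ℝ 1 g M)
    (hu : IsUnit (fderiv ℝ g θbar))
    (h₁ : ∀ ε > (0:ℝ), ∀ᶠ k in atTop, ∀ θ ∈ M, ‖fderiv ℝ (f k) θ - fderiv ℝ g θ‖ < ε)
    (a a' : ℕ → Option (Eucl p))
    (ha : ∀ k θ, a k = some θ → f k θ = 0)
    (ha' : ∀ k θ, a' k = some θ → f k θ = 0)
    (h₂ : ∀ ε > (0:ℝ), ∀ᶠ k in atTop, distδ (a k) θbar < ε)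
    (h₂' : ∀ ε > (0:ℝ), ∀ᶠ k in atTop, distδ (a' k) θbar < ε) :
    ∀ᶠ k in atTop, a k = a' k := by
  obtain ⟨u, huA⟩ := hu
  set A : Eucl p →L[ℝ] Eucl p := fderiv ℝ g θbar with hAdef
  set B : Eucl p →L[ℝ] Eucl p := ((u⁻¹ : (Eucl p →L[ℝ] Eucl p)ˣ) : Eucl p →L[ℝ] Eucl p)
    with hBdef
  have hBA : ∀ v : Eucl p, B (A v) = v := by
    intro v
    have h1 : B * A = 1 := by rw [hBdef, ← huA]; exact u.inv_mul
    calc B (A v) = (B * A) v := (ContinuousLinearMap.mul_apply _ _ _).symm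
    _ = v := by rw [h1]; rfl
  have hgderiv : ContinuousOn (fderiv ℝ g) M := hgC.continuousOn_fderiv_of_isOpen hM le_rfl
  have hcontA : ContinuousAt (fun θ => ‖fderiv ℝ g θ - A‖ * ‖B‖) θbar :=
    (((hgderiv.continuousAt (hM.mem_nhds hθM)).sub continuousAt_const).norm).mul
      continuousAt_const
  have hval : ‖fderiv ℝ g θbar - A‖ * ‖B‖ = 0 := by rw [← hAdef, sub_self, norm_zero, zero_mul]
  have htend : Tendsto (fun θ => ‖fderiv ℝ g θ - A‖ * ‖B‖) (𝓝 θbar) (𝓝 0) := by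
    rw [show (0:ℝ) = ‖fderiv ℝ g θbar - A‖ * ‖B‖ from hval.symm]
    exact hcontA
  have hsmall : ∀ᶠ θ in 𝓝 θbar, ‖fderiv ℝ g θ - A‖ * ‖B‖ < 4⁻¹ :=
    Filter.Tendsto.eventually_lt_const (by norm_num : (0:ℝ) < 4⁻¹) htend
  obtain ⟨r, hr0, hrball⟩ : ∃ r > 0,
      ball θbar r ⊆ M ∩ {θ | ‖fderiv ℝ g θ - A‖ * ‖B‖ < 4⁻¹} :=
    Metric.mem_nhds_iff.1 (Filter.inter_mem (hM.mem_nhds hθM) hsmall)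
  obtain ⟨j, hj⟩ : ∃ j : ℕ, ‖B‖ * (1/(j+1)) < 4⁻¹ := by
    obtain ⟨j, hj⟩ := exists_nat_gt (4 * ‖B‖)
    refine ⟨j, ?_⟩
    rw [mul_one_div, div_lt_iff₀ (by positivity)]
    nlinarith [norm_nonneg B]
  have hε₁ : (0:ℝ) < 1/(j+1) := by positivity
  have hmin : (0:ℝ) < min r 1 := lt_min hr0 one_pos
  filter_upwards [h₁ _ hε₁, h₂ _ hmin, h₂' _ hmin] with k hk1 hk2 hk3
  have hsub : ball θbar r ⊆ M := fun x hx => (hrball hx).1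
  cases hak : a k with
  | none =>
    rw [hak] at hk2
    have : distδ (none : Option (Eucl p)) θbar = 1 := rfl
    rw [this] at hk2
    exact absurd hk2 (not_lt.2 (min_le_right r 1))
  | some θ =>
    cases hak' : a' k with
    | none =>
      rw [hak'] at hk3
      have : distδ (none : Option (Eucl p)) θbar = 1 := rfl
      rw [this] at hk3
      exact absurd hk3 (not_lt.2 (min_le_right r 1))
    | some θ' =>
      rw [hak] at hk2; rw [hak'] at hk3
      have hdθ : dist θ θbar < r := lt_of_lt_of_le hk2 (min_le_left r 1)
      have hdθ' : dist θ' θbar < r := lt_of_lt_of_le hk3 (min_le_left r 1)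
      have hθr : θ ∈ ball θbar r := mem_ball.2 hdθ
      have hθr' : θ' ∈ ball θbar r := mem_ball.2 hdθ'
      have hfθ : f k θ = 0 := ha k θ hak
      have hfθ' : f k θ' = 0 := ha' k θ' hak'
      suffices hθθ : θ = θ' by rw [hθθ]
      by_cases hB0 : ‖B‖ = 0
      · have hB : B = 0 := norm_eq_zero.1 hB0
        have h0 : ∀ v : Eucl p, v = 0 := fun v => by
          rw [← hBA v, hB]; rfl
        rw [h0 θ, h0 θ']
      · have hBpos : (0:ℝ) < ‖B‖ := (norm_nonneg B).lt_of_ne (Ne.symm hB0)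
        set C : ℝ := 1/(j+1) + 4⁻¹ / ‖B‖ with hCdef
        have hbound : ∀ x ∈ ball θbar r, ‖fderiv ℝ (f k) x - A‖ ≤ C := by
          intro x hx
          have h1 : ‖fderiv ℝ (f k) x - fderiv ℝ g x‖ < 1/(j+1) := hk1 x (hsub hx)
          have h2 : ‖fderiv ℝ g x - A‖ < 4⁻¹ / ‖B‖ := by
            have h := (hrball hx).2
            rw [lt_div_iff₀ hBpos]
            exact h
          calc ‖fderiv ℝ (f k) x - A‖
              ≤ ‖fderiv ℝ (f k) x - fderiv ℝ g x‖ + ‖fderiv ℝ g x - A‖ := by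
                have := dist_triangle (fderiv ℝ (f k) x) (fderiv ℝ g x) A
                simpa [dist_eq_norm] using this
            _ ≤ C := by rw [hCdef]; exact add_le_add h1.le h2.le
        have hdiff : ∀ x ∈ ball θbar r, DifferentiableAt ℝ (f k) x := fun x hx =>
          ((hfC k).differentiableOn one_ne_zero).differentiableAt (hM.mem_nhds (hsub hx))
        have hmvt := (convex_ball θbar r).norm_image_sub_le_of_norm_fderiv_le'
          hdiff hbound hθr hθr'
        rw [hfθ, hfθ', sub_zero, zero_sub, norm_neg] at hmvt
        have hle : ‖θ' - θ‖ ≤ ‖B‖ * (C * ‖θ' - θ‖) := by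
          calc ‖θ' - θ‖ = ‖B (A (θ' - θ))‖ := by rw [hBA]
          _ ≤ ‖B‖ * ‖A (θ' - θ)‖ := B.le_opNorm _
          _ ≤ ‖B‖ * (C * ‖θ' - θ‖) := by
              exact mul_le_mul_of_nonneg_left hmvt (norm_nonneg B)
        have hBC : ‖B‖ * C < 2⁻¹ := by
          have hx : ‖B‖ * (4⁻¹ / ‖B‖) = 4⁻¹ := by field_simp
          have : ‖B‖ * C = ‖B‖ * (1/(j+1)) + ‖B‖ * (4⁻¹/‖B‖) := by rw [hCdef]; ring
          rw [this, hx]; linarith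
        have hnn : (0:ℝ) ≤ ‖θ' - θ‖ := norm_nonneg _
        have hassoc : ‖B‖ * (C * ‖θ' - θ‖) = (‖B‖ * C) * ‖θ' - θ‖ := (mul_assoc _ _ _).symm
        have hhalf : (‖B‖ * C) * ‖θ' - θ‖ ≤ 2⁻¹ * ‖θ' - θ‖ :=
          mul_le_mul_of_nonneg_right hBC.le hnn
        have hfin : ‖θ' - θ‖ ≤ 2⁻¹ * ‖θ' - θ‖ :=
          (hle.trans (le_of_eq hassoc)).trans hhalf
        have hzero : ‖θ' - θ‖ = 0 := le_antisymm (by linarith [hfin]) hnn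
        exact (sub_eq_zero.1 (norm_eq_zero.1 hzero)).symm

lemma IsEstimator.zero_of_some {Ω : Type*} {p : ℕ} {m : MeasurableSpace Ω} {Θ : Set (Eucl p)}
    {Gn : Eucl p → Ω → Eucl p} {e : Ω → Option (Eucl p)}
    (h : IsEstimator m Θ Gn e) {ω : Ω} {θ : Eucl p} (hθ : e ω = some θ) :
    Gn θ ω = 0 := by
  by_cases hD : ω ∈ Dset Θ Gn
  · obtain ⟨θ₀, h1, _, h3⟩ := (h.2 ω).1 hD
    rw [hθ] at h1
    obtain rfl : θ = θ₀ := Option.some_injective _ h1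
    exact h3
  · rw [(h.2 ω).2 hD] at hθ
    exact absurd hθ (by simp)

/-- **Theorem 2.1 (eventual uniqueness part).**  Under Condition 2.1, if `(θ̂ₙ)` and `(θ̂'ₙ)`
are two weakly `θ̄`-consistent sequences of `Gₙ`-estimators, then `P(θ̂ₙ ≠ θ̂'ₙ) → 0`. -/
theorem eventually_unique_of_weakly_consistent {Ω : Type*} [𝓕 : MeasurableSpace Ω] {p : ℕ}
    (P : Measure Ω) [IsProbabilityMeasure P] [P.IsComplete]
    (𝓕n : ℕ → MeasurableSpace Ω) (hle : ∀ n, 𝓕n n ≤ 𝓕)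
    (hcomplete : ∀ n, ∀ s : Set Ω, P s = 0 → MeasurableSet[𝓕n n] s)
    (Θ : Set (Eucl p)) (hΘ : MeasurableSet Θ)
    (G : ℕ → Eucl p → Ω → Eucl p)
    (hG : ∀ n, Measurable[MeasurableSpace.prod (inferInstance : MeasurableSpace ↥Θ) (𝓕n n)]
      (fun q : ↥Θ × Ω => G n q.1 q.2))
    (θbar : Eucl p) (M : Set (Eucl p)) (Glim : Eucl p → Ω → Eucl p)
    (hcond : Cond21 P Θ G θbar M Glim)
    (est est' : ℕ → Ω → Option (Eucl p))
    (hest : ∀ n, IsEstimator (𝓕n n) Θ (G n) (est n))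
    (hest' : ∀ n, IsEstimator (𝓕n n) Θ (G n) (est' n))
    (hwc : WeaklyConsistent P est θbar)
    (hwc' : WeaklyConsistent P est' θbar) :
    Tendsto (fun n => P {ω | est n ω ≠ est' n ω}) atTop (𝓝 0) := by
  obtain ⟨-, hMopen, hθM, -, -, -, haeC, hsup, haeU⟩ := hcond
  have hEmeas : ∀ n, MeasurableSet {ω | est n ω ≠ est' n ω} := fun n =>
    measurableSet_ne_option ((hest n).1.mono (hle n) le_rfl)
      ((hest' n).1.mono (hle n) le_rfl)
  apply tendsto_of_subseq_tendsto
  intro ns hns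
  -- set up the three families of exceptional sets
  set T₁ : ℝ → ℕ → Set Ω := fun ε n => {ω | ∃ θ ∈ M, ε ≤
    ‖fderiv ℝ (fun θ' => G n θ' ω) θ - fderiv ℝ (fun θ' => Glim θ' ω) θ‖} with hT₁
  have hmono₁ : ∀ n : ℕ, ∀ ε ε' : ℝ, ε ≤ ε' → T₁ ε' n ⊆ T₁ ε n := by
    intro n ε ε' h ω hω
    obtain ⟨θ, hθ, hn⟩ := hω
    exact ⟨θ, hθ, h.trans hn⟩
  obtain ⟨ms₁, hms₁, hae₁⟩ := extract_ae P T₁ hmono₁ hsup ns hns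
  set T₂ : ℝ → ℕ → Set Ω := fun ε n => {ω | ε ≤ distδ (est n ω) θbar} with hT₂
  have hmono₂ : ∀ n : ℕ, ∀ ε ε' : ℝ, ε ≤ ε' → T₂ ε' n ⊆ T₂ ε n :=
    fun n ε ε' h ω hω => h.trans hω
  obtain ⟨ms₂, hms₂, hae₂⟩ := extract_ae P T₂ hmono₂ hwc (fun k => ns (ms₁ k))
    (hns.comp hms₁)
  set T₃ : ℝ → ℕ → Set Ω := fun ε n => {ω | ε ≤ distδ (est' n ω) θbar} with hT₃
  have hmono₃ : ∀ n : ℕ, ∀ ε ε' : ℝ, ε ≤ ε' → T₃ ε' n ⊆ T₃ ε n :=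
    fun n ε ε' h ω hω => h.trans hω
  obtain ⟨ms₃, hms₃, hae₃⟩ := extract_ae P T₃ hmono₃ hwc' (fun k => ns (ms₁ (ms₂ k)))
    ((hns.comp hms₁).comp hms₂)
  refine ⟨fun k => ms₁ (ms₂ (ms₃ k)), ?_⟩
  set m : ℕ → ℕ := fun k => ns (ms₁ (ms₂ (ms₃ k))) with hm
  -- a.e., the two estimators eventually coincide along the subsequence m
  have haeEq : ∀ᵐ ω ∂P, ∀ᶠ k in atTop, est (m k) ω = est' (m k) ω := by
    filter_upwards [haeC, haeU, hae₁, hae₂, hae₃] with ω hC hU h1 h2 h3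
    refine key_eventually_eq M hMopen θbar hθM (fun k θ => G (m k) θ ω)
      (fun θ => Glim θ ω) (fun k => hC.1 (m k)) hC.2 hU ?_
      (fun k => est (m k) ω) (fun k => est' (m k) ω) ?_ ?_ ?_ ?_
    · intro ε hε
      have h' := (hms₂.comp hms₃).eventually (h1 ε hε)
      filter_upwards [h'] with k hk θ hθ
      by_contra hcon
      exact hk ⟨θ, hθ, not_lt.1 hcon⟩
    · exact fun k θ hkθ => (hest (m k)).zero_of_some hkθ
    · exact fun k θ hkθ => (hest' (m k)).zero_of_some hkθ
    · intro ε hε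
      have h' := hms₃.eventually (h2 ε hε)
      filter_upwards [h'] with k hk
      exact not_le.1 hk
    · intro ε hε
      filter_upwards [h3 ε hε] with k hk
      exact not_le.1 hk
  -- conclude by dominated convergence
  have hDCT : Tendsto
      (fun k => ∫⁻ ω, ({ω | est (m k) ω ≠ est' (m k) ω}).indicator (fun _ => (1:ℝ≥0∞)) ω ∂P)
      atTop (𝓝 (∫⁻ _, (0:ℝ≥0∞) ∂P)) := by
    refine tendsto_lintegral_of_dominated_convergence (fun _ => (1:ℝ≥0∞))
      (fun k => measurable_const.indicator (hEmeas (m k))) ?_ ?_ ?_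
    · intro k
      refine ae_of_all P fun ω => ?_
      by_cases hω : ω ∈ {ω | est (m k) ω ≠ est' (m k) ω} <;>
        simp [Set.indicator_apply, hω]
    · simp [lintegral_one]
    · filter_upwards [haeEq] with ω hω
      refine Tendsto.congr' ?_ tendsto_const_nhds
      filter_upwards [hω] with k hk
      simp [Set.indicator_apply, hk]
  rw [lintegral_zero] at hDCT
  exact hDCT.congr fun k => lintegral_indicator_one (hEmeas (m k))
end
end

section
/- Let (X_i)_{i≥1} be an ergodic sequence with state space (D, 𝒟) in the sense of (3.1), let r ≥ 1, let M ⊂ ℝ^p be compact, and let k : D^r × M → ℝ^{p×p} be jointly measurable such that θ ↦ k(x_1,…,x_r; θ) is continuous on M for every (x_1,…,x_r) ∈ D^r, and such that there is a Q_r-integrable function k̄ on D^r with ‖k(x_1,…,x_r; θ)‖ ≤ k̄(x_1,…,x_r) for all θ ∈ M. Define K_n(θ) = (1/n) Σ_{i=r}^n k(X_{i−r+1}, …, X_i; θ) and K(θ) = Q_r(k(θ)). Then sup_{θ∈M} ‖K_n(θ) − K(θ)‖ → 0 in P-probability as n → ∞. -/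
open MeasureTheory ProbabilityTheory Filter Topology Metric
open scoped RealInnerProductSpace

noncomputable section

/-- The estimating function of the form (3.2):
`Gₙ(θ) = (1/n) ∑_{i=r}^n g(X_{i-r+1}, …, X_i; θ)`. -/
def ergGn {Ω D : Type*} {p r : ℕ} (X : ℕ → Ω → D)
    (g : (Fin r → D) → Eucl p → Eucl p) (n : ℕ) (θ : Eucl p) (ω : Ω) : Eucl p :=
  (n : ℝ)⁻¹ • ∑ i ∈ Finset.Icc r n, g (fun j => X (i - r + 1 + (j : ℕ)) ω) θ

/-- Ergodicity in the sense of (3.1) (for blocks of length `r`): for every `Q_r`-integrable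
`f : D^r → ℝ`, `(1/n) ∑_{i=r}^n f(X_{i-r+1}, …, X_i) → Q_r(f)` in `P`-probability. -/
def ErgodicAvg {Ω D : Type*} [MeasurableSpace Ω] [MeasurableSpace D] {r : ℕ}
    (P : Measure Ω) (X : ℕ → Ω → D) (Q : Measure (Fin r → D)) : Prop :=
  ∀ f : (Fin r → D) → ℝ, Integrable f Q →
    TendstoInMeasure P
      (fun (n : ℕ) ω => (n : ℝ)⁻¹ * ∑ i ∈ Finset.Icc r n, f (fun j => X (i - r + 1 + (j : ℕ)) ω))
      atTop (fun _ => ∫ x, f x ∂Q)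

/-- **Condition 3.1** (with the derivative `∂_θ g` given by `g'`): there is `θ̄ ∈ int Θ` and a
neighbourhood `N ⊆ Θ` of `θ̄` such that (1) `g(θ)` is `Q_r`-integrable for `θ ∈ N` and
`Q_r(g(θ̄)) = 0`; (2) `θ ↦ g(x; θ)` is `C¹` on `N` for all `x`; (3) `∂_θ g` is locally
dominated `Q_r`-integrable on `N`; (4) the matrix `Q_r(∂_θ g(θ̄))` is invertible. -/
def Cond31 {D : Type*} [MeasurableSpace D] {p r : ℕ} (Q : Measure (Fin r → D))
    (Θ N : Set (Eucl p)) (θbar : Eucl p)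
    (g : (Fin r → D) → Eucl p → Eucl p)
    (g' : (Fin r → D) → Eucl p → (Eucl p →L[ℝ] Eucl p)) : Prop :=
  θbar ∈ interior Θ ∧ IsOpen N ∧ θbar ∈ N ∧ N ⊆ Θ ∧
  (∀ θ ∈ N, Integrable (fun x => g x θ) Q) ∧
  (∫ x, g x θbar ∂Q) = 0 ∧
  (∀ x, ∀ θ ∈ N, HasFDerivAt (g x) (g' x θ) θ) ∧
  (∀ x, ContinuousOn (g' x) N) ∧
  (∀ M : Set (Eucl p), IsCompact M → M ⊆ N →
    ∃ gbar : (Fin r → D) → ℝ, Integrable gbar Q ∧ ∀ x, ∀ θ ∈ M, ‖g' x θ‖ ≤ gbar x) ∧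
  IsUnit (∫ x, g' x θbar ∂Q)


section AuxULLN

lemma eucl_abs_le_norm {p : ℕ} (v : Eucl p) (a : Fin p) : |v a| ≤ ‖v‖ := by
  rw [EuclideanSpace.norm_eq]
  have : |v a| = Real.sqrt (‖v a‖^2) := by rw [Real.sqrt_sq_eq_abs]; simp
  rw [this]
  exact Real.sqrt_le_sqrt <|
    Finset.single_le_sum (f := fun i => ‖v i‖^2) (fun i _ => by positivity) (Finset.mem_univ a)

lemma eucl_norm_le_sum_abs {p : ℕ} (v : Eucl p) : ‖v‖ ≤ ∑ a, |v a| := by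
  rw [EuclideanSpace.norm_eq]
  have h1 : ∑ i, ‖v i‖^2 ≤ (∑ a, |v a|)^2 := by
    simp only [Real.norm_eq_abs]
    exact Finset.sum_sq_le_sq_sum_of_nonneg (fun i _ => abs_nonneg _)
  calc Real.sqrt (∑ i, ‖v i‖^2) ≤ Real.sqrt ((∑ a, |v a|)^2) := Real.sqrt_le_sqrt h1
    _ = ∑ a, |v a| := Real.sqrt_sq (by positivity)

lemma eucl_sum_single {p : ℕ} (v : Eucl p) :
    v = ∑ b, v b • EuclideanSpace.single b (1:ℝ) := by
  ext a
  rw [WithLp.ofLp_sum, Finset.sum_apply]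
  simp [EuclideanSpace.single_apply, Finset.sum_ite_eq']

lemma opnorm_le_sum_entries {p : ℕ} (T : Eucl p →L[ℝ] Eucl p) :
    ‖T‖ ≤ ∑ b, ∑ a, |T (EuclideanSpace.single b (1:ℝ)) a| := by
  apply ContinuousLinearMap.opNorm_le_bound _ (by positivity)
  intro v
  have hv : T v = ∑ b, v b • T (EuclideanSpace.single b (1:ℝ)) := by
    conv_lhs => rw [eucl_sum_single v]
    simp [map_sum]
  rw [hv]
  calc ‖∑ b, v b • T (EuclideanSpace.single b (1:ℝ))‖
      ≤ ∑ b, ‖v b • T (EuclideanSpace.single b (1:ℝ))‖ := norm_sum_le _ _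
    _ ≤ ∑ b, (∑ a, |T (EuclideanSpace.single b (1:ℝ)) a|) * ‖v‖ := by
        apply Finset.sum_le_sum
        intro b _
        rw [norm_smul]
        calc ‖v b‖ * ‖T (EuclideanSpace.single b (1:ℝ))‖
            ≤ ‖v‖ * ‖T (EuclideanSpace.single b (1:ℝ))‖ := by
              apply mul_le_mul_of_nonneg_right _ (norm_nonneg _)
              simpa using eucl_abs_le_norm v b
          _ ≤ ‖v‖ * ∑ a, |T (EuclideanSpace.single b (1:ℝ)) a| :=
              mul_le_mul_of_nonneg_left (eucl_norm_le_sum_abs _) (norm_nonneg _)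
          _ = _ := mul_comm _ _
    _ = (∑ b, ∑ a, |T (EuclideanSpace.single b (1:ℝ)) a|) * ‖v‖ := by
        rw [Finset.sum_mul]

end AuxULLN

set_option maxHeartbeats 1000000 in
/-- **Uniform law of large numbers (proof of Theorem 3.1).**  If `(Xᵢ)` is ergodic in the
sense of (3.1), `M ⊆ ℝ^p` is compact, `k(x; θ)` is a jointly measurable matrix-valued
function, continuous in `θ ∈ M` and dominated by a `Q_r`-integrable function `k̄`, then
`sup_{θ∈M} ‖Kₙ(θ) - K(θ)‖ → 0` in `P`-probability, where
`Kₙ(θ) = (1/n) ∑_{i=r}^n k(X_{i-r+1},…,X_i; θ)` and `K(θ) = Q_r(k(θ))`. -/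
theorem uniform_law_of_large_numbers {Ω D : Type*} [MeasurableSpace Ω]
    [MeasurableSpace D] {p r : ℕ}
    (P : Measure Ω) [IsProbabilityMeasure P]
    (hr : 1 ≤ r) (X : ℕ → Ω → D) (hX : ∀ i, Measurable (X i))
    (Q : Measure (Fin r → D)) [IsProbabilityMeasure Q]
    (hErg : ErgodicAvg P X Q)
    (M : Set (Eucl p)) (hM : IsCompact M)
    (k : (Fin r → D) → Eucl p → (Eucl p →L[ℝ] Eucl p))
    (hkmeas : StronglyMeasurable (Function.uncurry k))
    (hkcont : ∀ x, ContinuousOn (k x) M)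
    (kbar : (Fin r → D) → ℝ) (hkbar : Integrable kbar Q)
    (hdom : ∀ x, ∀ θ ∈ M, ‖k x θ‖ ≤ kbar x) :
    ∀ ε > (0 : ℝ), Tendsto (fun (n : ℕ) =>
      P {ω | ∃ θ ∈ M, ε ≤
        ‖((n : ℝ)⁻¹ • ∑ i ∈ Finset.Icc r n, k (fun j => X (i - r + 1 + (j : ℕ)) ω) θ) -
          ∫ x, k x θ ∂Q‖}) atTop (𝓝 0) := by

  classical
  intro ε hε
  rcases M.eq_empty_or_nonempty with rfl | hMne
  · simp only [Set.mem_empty_iff_false, false_and, exists_false, Set.setOf_false,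
      measure_empty]
    exact tendsto_const_nhds
  -- a dense sequence in M
  obtain ⟨c, hcM, hcc, hccl⟩ := EMetric.subset_countable_closure_of_compact hM
  have hcne : c.Nonempty := by
    rcases c.eq_empty_or_nonempty with rfl | hcn
    · obtain ⟨θ, hθ⟩ := hMne; simpa using hccl hθ
    · exact hcn
  obtain ⟨u, hu⟩ := hcc.exists_eq_range hcne
  have huM : ∀ i, u i ∈ M := fun i => hcM (hu ▸ Set.mem_range_self i)
  have hMcl : ∀ θ ∈ M, ∀ ρ > (0:ℝ), ∃ i, dist θ (u i) < ρ := by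
    intro θ hθ ρ hρ
    have hmem := hccl hθ
    rw [hu, Metric.mem_closure_iff] at hmem
    obtain ⟨b, ⟨i, rfl⟩, hb⟩ := hmem ρ hρ
    exact ⟨i, hb⟩
  -- measurability and integrability of k(·, θ)
  have hmeasθ : ∀ θ : Eucl p, StronglyMeasurable (fun x => k x θ) :=
    fun θ => hkmeas.comp_measurable (measurable_id.prodMk measurable_const)
  have hInt : ∀ θ ∈ M, Integrable (fun x => k x θ) Q := fun θ hθ =>
    Integrable.mono' hkbar (hmeasθ θ).aestronglyMeasurable
      (ae_of_all _ fun x => hdom x θ hθ)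
  have hkbar_nonneg : ∀ x, 0 ≤ kbar x := fun x =>
    le_trans (norm_nonneg _) (hdom x _ hMne.choose_spec)
  -- the modulus of continuity
  set g : Eucl p → ℝ → ℕ → (Fin r → D) → ℝ :=
    fun θ₀ δ i x => if u i ∈ ball θ₀ δ then ‖k x (u i) - k x θ₀‖ else 0 with hg_def
  set h : Eucl p → ℝ → (Fin r → D) → ℝ := fun θ₀ δ x => ⨆ i, g θ₀ δ i x with hh_def
  have hg_nonneg : ∀ θ₀ δ i x, 0 ≤ g θ₀ δ i x := by
    intro θ₀ δ i x; simp only [hg_def]; split_ifs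
    · exact norm_nonneg _
    · exact le_refl 0
  have hg_le : ∀ θ₀, θ₀ ∈ M → ∀ δ i x, g θ₀ δ i x ≤ kbar x + kbar x := by
    intro θ₀ hθ₀ δ i x; simp only [hg_def]; split_ifs
    · exact (norm_sub_le _ _).trans (add_le_add (hdom x _ (huM i)) (hdom x _ hθ₀))
    · exact add_nonneg (hkbar_nonneg x) (hkbar_nonneg x)
  have hbdd : ∀ θ₀, θ₀ ∈ M → ∀ δ x, BddAbove (Set.range fun i => g θ₀ δ i x) := by
    intro θ₀ hθ₀ δ x
    exact ⟨kbar x + kbar x, by rintro y ⟨i, rfl⟩; exact hg_le θ₀ hθ₀ δ i x⟩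
  have hh_nonneg : ∀ θ₀, θ₀ ∈ M → ∀ δ x, 0 ≤ h θ₀ δ x := fun θ₀ hθ₀ δ x =>
    (hg_nonneg θ₀ δ 0 x).trans (le_ciSup (hbdd θ₀ hθ₀ δ x) 0)
  have hh_le : ∀ θ₀, θ₀ ∈ M → ∀ δ x, h θ₀ δ x ≤ kbar x + kbar x := fun θ₀ hθ₀ δ x =>
    ciSup_le (fun i => hg_le θ₀ hθ₀ δ i x)
  have hh_meas : ∀ θ₀ δ, Measurable (h θ₀ δ) := by
    intro θ₀ δ
    simp only [hh_def]
    apply Measurable.iSup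
    intro i
    simp only [hg_def]
    split_ifs
    · exact (((hmeasθ (u i)).sub (hmeasθ θ₀)).norm).measurable
    · exact measurable_const
  have hh_int : ∀ θ₀, θ₀ ∈ M → ∀ δ, Integrable (h θ₀ δ) Q := by
    intro θ₀ hθ₀ δ
    refine Integrable.mono' (hkbar.add hkbar) (hh_meas θ₀ δ).aestronglyMeasurable
      (ae_of_all _ fun x => ?_)
    rw [Real.norm_eq_abs, abs_of_nonneg (hh_nonneg θ₀ hθ₀ δ x)]
    exact hh_le θ₀ hθ₀ δ x
  -- h dominates the oscillation
  have hh_ge : ∀ θ₀, θ₀ ∈ M → ∀ δ : ℝ, ∀ θ ∈ M, dist θ θ₀ < δ →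
      ∀ x, ‖k x θ - k x θ₀‖ ≤ h θ₀ δ x := by
    intro θ₀ hθ₀ δ θ hθ hθδ x
    have hpos : ∀ m : ℕ, (0:ℝ) < min ((1:ℝ)/(m+1)) (δ - dist θ θ₀) := by
      intro m
      have : (0:ℝ) < (1:ℝ)/(m+1) := by positivity
      exact lt_min this (by linarith)
    choose i hi using fun m : ℕ => hMcl θ hθ _ (hpos m)
    have hball : ∀ m, u (i m) ∈ ball θ₀ δ := by
      intro m
      have h1 : dist (u (i m)) θ < δ - dist θ θ₀ :=
        (dist_comm θ (u (i m)) ▸ hi m).trans_le (min_le_right _ _)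
      have h2 := dist_triangle (u (i m)) θ θ₀
      rw [mem_ball]
      linarith
    have htend : Tendsto (fun m => u (i m)) atTop (𝓝 θ) := by
      rw [tendsto_iff_dist_tendsto_zero]
      refine squeeze_zero (fun m => dist_nonneg) (fun m => ?_)
        tendsto_one_div_add_atTop_nhds_zero_nat
      exact le_of_lt ((dist_comm (u (i m)) θ ▸ hi m).trans_le (min_le_left _ _))
    have htendM : Tendsto (fun m => u (i m)) atTop (𝓝[M] θ) := by
      rw [tendsto_nhdsWithin_iff]
      exact ⟨htend, Eventually.of_forall fun m => huM (i m)⟩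
    have t1 : Tendsto (fun m => k x (u (i m))) atTop (𝓝 (k x θ)) :=
      (hkcont x θ hθ).tendsto.comp htendM
    have hk : Tendsto (fun m => ‖k x (u (i m)) - k x θ₀‖) atTop (𝓝 ‖k x θ - k x θ₀‖) :=
      (t1.sub tendsto_const_nhds).norm
    refine le_of_tendsto hk (Eventually.of_forall fun m => ?_)
    have hgm : g θ₀ δ (i m) x = ‖k x (u (i m)) - k x θ₀‖ := by
      simp only [hg_def]; rw [if_pos (hball m)]
    calc ‖k x (u (i m)) - k x θ₀‖ = g θ₀ δ (i m) x := hgm.symm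
      _ ≤ h θ₀ δ x := le_ciSup (hbdd θ₀ hθ₀ δ x) (i m)
  -- dominated convergence: the integral of h tends to 0 as δ → 0
  have hδ : ∀ θ₀ ∈ M, ∃ δ > (0:ℝ), ∫ x, h θ₀ δ x ∂Q < ε/4 := by
    intro θ₀ hθ₀
    have hlim : ∀ x, Tendsto (fun m : ℕ => h θ₀ (1/(m+1)) x) atTop (𝓝 0) := by
      intro x
      rw [Metric.tendsto_atTop]
      intro ρ hρ
      have hc := hkcont x θ₀ hθ₀
      rw [Metric.continuousWithinAt_iff] at hc
      obtain ⟨δ₀, hδ₀, hc⟩ := hc (ρ/2) (by linarith)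
      obtain ⟨N, hN⟩ := exists_nat_gt (1/δ₀)
      refine ⟨N, fun m hm => ?_⟩
      have hNm : (N:ℝ) ≤ m := by exact_mod_cast hm
      have hsmall : (1:ℝ)/(m+1) ≤ δ₀ := by
        rw [div_le_iff₀ (by positivity)]
        rw [div_lt_iff₀ hδ₀] at hN
        nlinarith
      have hle : h θ₀ (1/(m+1)) x ≤ ρ/2 := by
        refine ciSup_le fun i => ?_
        simp only [hg_def]
        split_ifs with hib
        · rw [mem_ball] at hib
          have hd := hc (huM i) (lt_of_lt_of_le hib hsmall)
          rw [dist_eq_norm] at hd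
          exact hd.le
        · linarith
      rw [Real.dist_eq, sub_zero, abs_of_nonneg (hh_nonneg θ₀ hθ₀ _ x)]
      linarith
    have hDCT : Tendsto (fun m : ℕ => ∫ x, h θ₀ (1/(m+1)) x ∂Q) atTop (𝓝 0) := by
      have hd := tendsto_integral_of_dominated_convergence (μ := Q)
        (F := fun m x => h θ₀ (1/(m+1)) x) (f := fun _ => (0:ℝ))
        (bound := fun x => kbar x + kbar x)
        (fun m => (hh_meas θ₀ _).aestronglyMeasurable)
        (hkbar.add hkbar)
        (fun m => ae_of_all _ fun x => by
          rw [Real.norm_eq_abs, abs_of_nonneg (hh_nonneg θ₀ hθ₀ _ x)]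
          exact hh_le θ₀ hθ₀ _ x)
        (ae_of_all _ hlim)
      simpa using hd
    obtain ⟨m, hm⟩ := (hDCT.eventually (gt_mem_nhds (by positivity : (0:ℝ) < ε/4))).exists
    exact ⟨1/(m+1), by positivity, hm⟩
  choose! δf hδf1 hδf2 using hδ
  -- finite subcover
  obtain ⟨t, ht⟩ := hM.elim_finite_subcover (fun θ₀ : M => ball (θ₀ : Eucl p) (δf θ₀))
    (fun _ => isOpen_ball)
    (fun θ hθ => Set.mem_iUnion.2 ⟨⟨θ, hθ⟩, mem_ball_self (hδf1 θ hθ)⟩)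
  -- entry functionals
  set L : Fin p → Fin p → ((Eucl p →L[ℝ] Eucl p) →L[ℝ] ℝ) := fun a b =>
    (EuclideanSpace.proj a).comp
      (ContinuousLinearMap.apply ℝ (Eucl p) (EuclideanSpace.single b (1:ℝ))) with hL_def
  have hL_apply : ∀ (a b : Fin p) (T : Eucl p →L[ℝ] Eucl p),
      L a b T = T (EuclideanSpace.single b (1:ℝ)) a := fun a b T => rfl
  have hfint : ∀ (a b : Fin p), ∀ θ₀ ∈ M, Integrable (fun x => L a b (k x θ₀)) Q :=
    fun a b θ₀ hθ₀ => (L a b).integrable_comp (hInt θ₀ hθ₀)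
  have hfswap : ∀ (a b : Fin p), ∀ θ₀ ∈ M,
      (∫ x, L a b (k x θ₀) ∂Q) = L a b (∫ x, k x θ₀ ∂Q) :=
    fun a b θ₀ hθ₀ => (L a b).integral_comp_comm (hInt θ₀ hθ₀)
  -- abbreviations
  set An : ((Fin r → D) → ℝ) → ℕ → Ω → ℝ := fun f n ω =>
    (n : ℝ)⁻¹ * ∑ i ∈ Finset.Icc r n, f (fun j => X (i - r + 1 + (j : ℕ)) ω) with hAn_def
  set Kn : ℕ → Eucl p → Ω → (Eucl p →L[ℝ] Eucl p) := fun n θ ω =>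
    (n : ℝ)⁻¹ • ∑ i ∈ Finset.Icc r n, k (fun j => X (i - r + 1 + (j : ℕ)) ω) θ with hKn_def
  set Kq : Eucl p → (Eucl p →L[ℝ] Eucl p) := fun θ => ∫ x, k x θ ∂Q with hKq_def
  set ε' : ℝ := ε/(4*((p:ℝ)*p+1)) with hε'_def
  have hε'pos : 0 < ε' := by
    rw [hε'_def]; positivity
  -- the bad events
  set F : M → ℕ → Set Ω := fun j n =>
    {ω | ε/4 ≤ dist (An (h (j:Eucl p) (δf j)) n ω) (∫ x, h (j:Eucl p) (δf j) x ∂Q)} ∪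
    ⋃ a : Fin p, ⋃ b : Fin p,
      {ω | ε' ≤ dist (An (fun x => L a b (k x (j:Eucl p))) n ω)
        (∫ x, L a b (k x (j:Eucl p)) ∂Q)} with hF_def
  -- each F j has measure tending to zero
  have hFj : ∀ j ∈ t, Tendsto (fun n => P (F j n)) atTop (𝓝 0) := by
    intro j _
    have hjM : (j:Eucl p) ∈ M := j.2
    have hb : ∀ n, P (F j n) ≤
        P {ω | ε/4 ≤ dist (An (h (j:Eucl p) (δf j)) n ω)
            (∫ x, h (j:Eucl p) (δf j) x ∂Q)} +
        ∑ a : Fin p, ∑ b : Fin p,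
          P {ω | ε' ≤ dist (An (fun x => L a b (k x (j:Eucl p))) n ω)
            (∫ x, L a b (k x (j:Eucl p)) ∂Q)} := by
      intro n
      refine (measure_union_le _ _).trans (add_le_add le_rfl ?_)
      calc P (⋃ a : Fin p, ⋃ b : Fin p, _) ≤ ∑' a : Fin p, P (⋃ b : Fin p, _) :=
            measure_iUnion_le _
        _ ≤ ∑' a : Fin p, ∑' b : Fin p, P _ :=
            ENNReal.tsum_le_tsum (fun a => measure_iUnion_le _)
        _ = _ := by
            rw [tsum_fintype]
            exact Finset.sum_congr rfl (fun a _ => tsum_fintype _)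
    have t1 : Tendsto (fun n => P {ω | ε/4 ≤ dist (An (h (j:Eucl p) (δf j)) n ω)
        (∫ x, h (j:Eucl p) (δf j) x ∂Q)}) atTop (𝓝 0) :=
      tendstoInMeasure_iff_dist.1 (hErg (h (j:Eucl p) (δf j)) (hh_int _ hjM (δf j))) (ε/4) (by positivity)
    have t2 : ∀ a b : Fin p, Tendsto (fun n =>
        P {ω | ε' ≤ dist (An (fun x => L a b (k x (j:Eucl p))) n ω)
          (∫ x, L a b (k x (j:Eucl p)) ∂Q)}) atTop (𝓝 0) :=
      fun a b => tendstoInMeasure_iff_dist.1 (hErg (fun x => L a b (k x (j:Eucl p))) (hfint a b _ hjM)) ε' hε'pos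
    have hcomb : Tendsto (fun n =>
        P {ω | ε/4 ≤ dist (An (h (j:Eucl p) (δf j)) n ω)
            (∫ x, h (j:Eucl p) (δf j) x ∂Q)} +
        ∑ a : Fin p, ∑ b : Fin p,
          P {ω | ε' ≤ dist (An (fun x => L a b (k x (j:Eucl p))) n ω)
            (∫ x, L a b (k x (j:Eucl p)) ∂Q)}) atTop (𝓝 0) := by
      have hs : Tendsto (fun n => ∑ a : Fin p, ∑ b : Fin p,
          P {ω | ε' ≤ dist (An (fun x => L a b (k x (j:Eucl p))) n ω)
            (∫ x, L a b (k x (j:Eucl p)) ∂Q)}) atTop (𝓝 0) := by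
        have := tendsto_finset_sum (Finset.univ : Finset (Fin p))
          (fun a _ => tendsto_finset_sum (Finset.univ : Finset (Fin p))
            (fun b _ => t2 a b))
        simpa using this
      simpa using t1.add hs
    exact tendsto_of_tendsto_of_tendsto_of_le_of_le tendsto_const_nhds hcomb
      (fun n => zero_le) hb
  -- inclusion of the bad event in the union of the F j
  have hincl : ∀ n : ℕ, {ω | ∃ θ ∈ M, ε ≤ ‖Kn n θ ω - Kq θ‖} ⊆ ⋃ j ∈ t, F j n := by
    intro n ω hω
    obtain ⟨θ, hθ, hθε⟩ := hω
    obtain ⟨j, hjt, hjb⟩ : ∃ j ∈ t, θ ∈ ball (j : Eucl p) (δf j) := by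
      have hcov := ht hθ
      simpa using hcov
    rw [Set.mem_iUnion₂]
    refine ⟨j, hjt, ?_⟩
    by_contra hc
    have hjM : (j:Eucl p) ∈ M := j.2
    rw [hF_def] at hc
    simp only [Set.mem_union, Set.mem_iUnion, Set.mem_setOf_eq, not_or, not_exists,
      not_le] at hc
    obtain ⟨h1, h2⟩ := hc
    have hθj : dist θ (j : Eucl p) < δf j := mem_ball.1 hjb
    -- first piece
    have key1 : ‖Kn n θ ω - Kn n (j:Eucl p) ω‖ ≤ An (h (j:Eucl p) (δf j)) n ω := by
      have e1 : Kn n θ ω - Kn n (j:Eucl p) ω = (n:ℝ)⁻¹ •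
          ∑ i ∈ Finset.Icc r n, (k (fun l => X (i - r + 1 + (l : ℕ)) ω) θ -
            k (fun l => X (i - r + 1 + (l : ℕ)) ω) (j:Eucl p)) := by
        rw [hKn_def]
        dsimp only
        rw [Finset.sum_sub_distrib, smul_sub]
      rw [e1, hAn_def]
      refine le_trans (norm_smul_le ((n:ℝ)⁻¹) (∑ i ∈ Finset.Icc r n, (k (fun l => X (i - r + 1 + (l : ℕ)) ω) θ - k (fun l => X (i - r + 1 + (l : ℕ)) ω) (j:Eucl p)))) ?_
      rw [Real.norm_eq_abs, abs_of_nonneg (by positivity : (0:ℝ) ≤ (n:ℝ)⁻¹)]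
      dsimp only
      refine mul_le_mul_of_nonneg_left ?_ (by positivity)
      refine (norm_sum_le _ _).trans (Finset.sum_le_sum fun i _ => ?_)
      exact hh_ge (j:Eucl p) hjM (δf j) θ hθ hθj _
    -- second piece
    have key2 : ‖Kn n (j:Eucl p) ω - Kq (j:Eucl p)‖ ≤ (p:ℝ) * p * ε' := by
      have e2 : ∀ a b : Fin p, L a b (Kn n (j:Eucl p) ω) =
          An (fun x => L a b (k x (j:Eucl p))) n ω := by
        intro a b
        simp only [hKn_def, hAn_def, _root_.map_smul, map_sum, smul_eq_mul]
      have e3 : ∀ a b : Fin p, L a b (Kq (j:Eucl p)) =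
          ∫ x, L a b (k x (j:Eucl p)) ∂Q := by
        intro a b
        rw [hfswap a b _ hjM, hKq_def]
      calc ‖Kn n (j:Eucl p) ω - Kq (j:Eucl p)‖
          ≤ ∑ b : Fin p, ∑ a : Fin p,
            |(Kn n (j:Eucl p) ω - Kq (j:Eucl p)) (EuclideanSpace.single b (1:ℝ)) a| :=
            opnorm_le_sum_entries _
        _ ≤ ∑ _b : Fin p, ∑ _a : Fin p, ε' := by
            refine Finset.sum_le_sum fun b _ => Finset.sum_le_sum fun a _ => ?_
            have : (Kn n (j:Eucl p) ω - Kq (j:Eucl p)) (EuclideanSpace.single b (1:ℝ)) a =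
                L a b (Kn n (j:Eucl p) ω) - L a b (Kq (j:Eucl p)) := by
              rw [← map_sub]; rfl
            rw [this, e2 a b, e3 a b, ← Real.dist_eq]
            exact (h2 a b).le
        _ = (p:ℝ) * p * ε' := by
            simp [Finset.sum_const, Finset.card_univ, mul_assoc]
    have hp2 : (p:ℝ) * p * ε' ≤ ε/4 := by
      have h0 : (0:ℝ) < (p:ℝ)*p+1 := by positivity
      have e : (p:ℝ) * p * (ε/(4*((p:ℝ)*p+1))) = (ε/4) * (((p:ℝ)*p)/((p:ℝ)*p+1)) := by
        field_simp
      rw [hε'_def, e]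
      have h1 : ((p:ℝ)*p)/((p:ℝ)*p+1) ≤ 1 := (div_le_one h0).2 (by linarith)
      nlinarith [h1, hε]
    -- third piece
    have key3 : ‖Kq (j:Eucl p) - Kq θ‖ ≤ ∫ x, h (j:Eucl p) (δf j) x ∂Q := by
      have e4 : Kq (j:Eucl p) - Kq θ = ∫ x, (k x (j:Eucl p) - k x θ) ∂Q := by
        rw [hKq_def]
        exact (integral_sub (hInt _ hjM) (hInt θ hθ)).symm
      rw [e4]
      refine (norm_integral_le_integral_norm _).trans ?_
      refine integral_mono ((hInt _ hjM).sub (hInt θ hθ)).norm (hh_int _ hjM (δf j))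
        (fun x => ?_)
      rw [norm_sub_rev]
      exact hh_ge (j:Eucl p) hjM (δf j) θ hθ hθj x
    -- combine
    have habs : An (h (j:Eucl p) (δf j)) n ω <
        (∫ x, h (j:Eucl p) (δf j) x ∂Q) + ε/4 := by
      have := abs_lt.1 (by rw [← Real.dist_eq]; exact h1)
      linarith [this.2]
    have hint4 : (∫ x, h (j:Eucl p) (δf j) x ∂Q) < ε/4 := hδf2 _ hjM
    have tri : ‖Kn n θ ω - Kq θ‖ ≤ ‖Kn n θ ω - Kn n (j:Eucl p) ω‖ +
        ‖Kn n (j:Eucl p) ω - Kq (j:Eucl p)‖ + ‖Kq (j:Eucl p) - Kq θ‖ := by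
      have := norm_add_le (Kn n θ ω - Kn n (j:Eucl p) ω)
        ((Kn n (j:Eucl p) ω - Kq (j:Eucl p)) + (Kq (j:Eucl p) - Kq θ))
      have h5 := norm_add_le (Kn n (j:Eucl p) ω - Kq (j:Eucl p)) (Kq (j:Eucl p) - Kq θ)
      calc ‖Kn n θ ω - Kq θ‖ = ‖(Kn n θ ω - Kn n (j:Eucl p) ω) +
            ((Kn n (j:Eucl p) ω - Kq (j:Eucl p)) + (Kq (j:Eucl p) - Kq θ))‖ := by
            congr 1; abel
        _ ≤ _ := this
        _ ≤ _ := by linarith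
    linarith [key1, key2, key3, hθε, tri, habs, hint4, hp2]
  -- conclude
  have hbound : ∀ n : ℕ, P {ω | ∃ θ ∈ M, ε ≤ ‖Kn n θ ω - Kq θ‖} ≤
      ∑ j ∈ t, P (F j n) := fun n =>
    (measure_mono (hincl n)).trans (measure_biUnion_finset_le t _)
  have hsum : Tendsto (fun n => ∑ j ∈ t, P (F j n)) atTop (𝓝 0) := by
    have := tendsto_finset_sum t hFj
    simpa using this
  exact tendsto_of_tendsto_of_tendsto_of_le_of_le tendsto_const_nhds hsum
    (fun n => zero_le) hbound
end
end
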